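/- Let τ be a regular mapping and let Γ(τ) = {I = i_1⋯i_{|I|} ∈ Σ_q^* : i_{|I|} ≠ 0} ∪ {0}. If I, J ∈ Γ(τ) are distinct words and I_{1,k} = J_{1,k} for some integer k ≥ 0 (the condition being vacuous for k = 0), then |τ*(I) − τ*(J)| ≥ p^k. -/

import Mathlib

open Filter Set
open scoped ENNReal NNReal

/-- The upper `r`-Beurling density of a set `Λ ⊆ ℝ`:
`D_r^+(Λ) = limsup_{h→∞} sup_{x∈ℝ} #(Λ ∩ (x−h, x+h)) / h^r`. -/
noncomputable def beurlingDensityPlus (r : ℝ) (Λ : Set ℝ) : ℝ≥0∞ :=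
  Filter.limsup
    (fun h : ℝ => ⨆ x : ℝ, ((Λ ∩ Set.Ioo (x - h) (x + h)).encard : ℝ≥0∞) / ENNReal.ofReal (h ^ r))
    Filter.atTop

/-- `wTake I k` is the word `I_{1,k}`: the first `k` letters of `I`, padded with `0`s if `k > |I|`. -/
def wTake (I : List ℕ) (k : ℕ) : List ℕ := (I ++ List.replicate k 0).take k

/-- `τ : Σ_q^* → {-1,0,…,p-2}` is a regular mapping (words are modelled as nonempty lists of
naturals `< q`): (i) `τ(0^n) = 0`; (ii) `τ(I) ∈ {-1,…,p-2}` and `τ(I) ≡ i_n (mod q)` where `i_n`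
is the last letter of `I`; (iii) for every word `I`, `τ(I0^l) = 0` for all sufficiently large `l`. -/
def IsRegularMap (p q : ℕ) (τ : List ℕ → ℤ) : Prop :=
  (∀ n : ℕ, 1 ≤ n → τ (List.replicate n 0) = 0) ∧
  (∀ I : List ℕ, I ≠ [] → (∀ i ∈ I, i < q) →
    (-1 ≤ τ I ∧ τ I ≤ (p : ℤ) - 2 ∧ (q : ℤ) ∣ (τ I - (I.getLast! : ℤ)))) ∧
  (∀ I : List ℕ, I ≠ [] → (∀ i ∈ I, i < q) →
    ∃ L : ℕ, ∀ l : ℕ, L ≤ l → τ (I ++ List.replicate l 0) = 0)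

/-- `τ*(I) = Σ_{k ≥ 1} τ(I_{1,k}) p^{k-1}` (a finite sum for regular `τ`). -/
noncomputable def tauStar (p : ℕ) (τ : List ℕ → ℤ) (I : List ℕ) : ℤ :=
  ∑ᶠ k : ℕ, τ (wTake I (k + 1)) * (p : ℤ) ^ k

/-- The maximal orthogonal set `Λ(τ) = {τ*(I) : I ∈ Σ_q^*} ∪ {0}`, viewed as a subset of `ℝ`. -/
def LambdaTau (p q : ℕ) (τ : List ℕ → ℤ) : Set ℝ :=
  {x : ℝ | ∃ I : List ℕ, I ≠ [] ∧ (∀ i ∈ I, i < q) ∧ x = (tauStar p τ I : ℝ)} ∪ {0}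

/-- `Γ(τ) = {I ∈ Σ_q^* : last letter of I is nonzero} ∪ {0}`. -/
def GammaTau (q : ℕ) : Set (List ℕ) :=
  {I | I ≠ [] ∧ (∀ i ∈ I, i < q) ∧ I.getLast! ≠ 0} ∪ {[0]}


section AuxTauStar

lemma wTake_length' (I : List ℕ) (n : ℕ) : (wTake I n).length = n := by
  simp [wTake]

lemma wTake_getD (I : List ℕ) {m n : ℕ} (h : m < n) :
    (wTake I n).getD m 0 = I.getD m 0 := by
  rw [List.getD_eq_getElem?_getD, List.getD_eq_getElem?_getD, wTake, List.getElem?_take,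
    if_pos h, List.getElem?_append]
  rcases lt_or_ge m I.length with hm | hm
  · rw [if_pos hm]
  · rw [if_neg (not_lt.2 hm), List.getElem?_replicate]
    have : m - I.length < n := by omega
    rw [if_pos this]
    simp [List.getElem?_eq_none hm]

lemma wTake_of_le (I : List ℕ) {n : ℕ} (h : I.length ≤ n) :
    wTake I n = I ++ List.replicate (n - I.length) 0 := by
  rw [wTake, List.take_append, List.take_of_length_le h, List.take_replicate]
  rw [min_eq_left (Nat.sub_le n I.length)]

lemma wTake_getLast! (I : List ℕ) (n : ℕ) : (wTake I (n + 1)).getLast! = I.getD n 0 := by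
  have hne : wTake I (n + 1) ≠ [] := by
    intro h
    have := wTake_length' I (n + 1)
    rw [h] at this; simp at this
  rw [List.getLast!_of_getLast? (List.getLast?_eq_getLast hne),
    List.getLast_eq_getElem, ← List.getD_eq_getElem _ 0, wTake_length']
  have h1 : (n + 1) - 1 = n := rfl
  rw [h1, wTake_getD I (Nat.lt_succ_self n)]

lemma wTake_ne_nil (I : List ℕ) (n : ℕ) : wTake I (n + 1) ≠ [] := by
  intro h
  have := wTake_length' I (n + 1)
  rw [h] at this; simp at this

lemma wTake_mem_lt {q : ℕ} (hq : 0 < q) {I : List ℕ} (hI : ∀ i ∈ I, i < q) (n : ℕ) :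
    ∀ i ∈ wTake I n, i < q := by
  intro i hi
  have hi' : i ∈ I ++ List.replicate n 0 := List.mem_of_mem_take hi
  rcases List.mem_append.1 hi' with h | h
  · exact hI i h
  · rw [List.eq_of_mem_replicate h]; exact hq

lemma wTake_eq_of_getD {I J : List ℕ} {n : ℕ}
    (h : ∀ m < n, I.getD m 0 = J.getD m 0) : wTake I n = wTake J n := by
  apply List.ext_getElem
  · rw [wTake_length', wTake_length']
  · intro m h1 h2
    rw [wTake_length'] at h1
    rw [← List.getD_eq_getElem _ 0, ← List.getD_eq_getElem _ 0,
      wTake_getD I h1, wTake_getD J h1]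
    exact h m h1

lemma getD_lt {q : ℕ} (hq : 0 < q) {I : List ℕ} (hI : ∀ i ∈ I, i < q) (m : ℕ) :
    I.getD m 0 < q := by
  rcases lt_or_ge m I.length with hm | hm
  · rw [List.getD_eq_getElem _ 0 hm]
    exact hI _ (List.getElem_mem hm)
  · rw [List.getD_eq_default _ _ hm]; exact hq

lemma gamma_facts {q : ℕ} (hq : 2 ≤ q) {I : List ℕ} (hI : I ∈ GammaTau q) :
    I ≠ [] ∧ ∀ i ∈ I, i < q := by
  rcases hI with ⟨h1, h2, _⟩ | h
  · exact ⟨h1, h2⟩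
  · simp only [Set.mem_singleton_iff] at h
    subst h
    refine ⟨by simp, ?_⟩
    intro i hi
    simp only [List.mem_singleton] at hi
    omega

lemma gamma_len_le {q : ℕ} {I J : List ℕ} (hI : I ∈ GammaTau q) (hJ : J ∈ GammaTau q)
    (h : ∀ m, I.getD m 0 = J.getD m 0) : J.length ≤ I.length := by
  by_contra hlen
  push_neg at hlen
  have hJne : J ≠ [] := by
    rcases hJ with ⟨h1, _⟩ | h1
    · exact h1
    · simp only [Set.mem_singleton_iff] at h1; subst h1; simp
  have hlast : J.getLast! = 0 := by
    rw [List.getLast!_of_getLast? (List.getLast?_eq_getLast hJne),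
      List.getLast_eq_getElem, ← List.getD_eq_getElem _ 0, ← h (J.length - 1),
      List.getD_eq_default]
    omega
  rcases hJ with ⟨_, _, h3⟩ | h3
  · exact h3 hlast
  · simp only [Set.mem_singleton_iff] at h3
    subst h3
    have hIne : I ≠ [] := by
      rcases hI with ⟨h1, _⟩ | h1
      · exact h1
      · simp only [Set.mem_singleton_iff] at h1; subst h1; simp
    apply hIne
    apply List.length_eq_zero_iff.1
    simp only [List.length_singleton] at hlen
    omega

lemma gamma_ext {q : ℕ} {I J : List ℕ} (hI : I ∈ GammaTau q) (hJ : J ∈ GammaTau q)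
    (h : ∀ m, I.getD m 0 = J.getD m 0) : I = J := by
  have h1 := gamma_len_le hI hJ h
  have h2 := gamma_len_le hJ hI (fun m => (h m).symm)
  apply List.ext_getElem (le_antisymm h2 h1)
  intro m hm1 hm2
  rw [← List.getD_eq_getElem _ 0, ← List.getD_eq_getElem _ 0]
  exact h m

lemma tau_support {p q : ℕ} {τ : List ℕ → ℤ} (hτ : IsRegularMap p q τ)
    {I : List ℕ} (hIne : I ≠ []) (hIlt : ∀ i ∈ I, i < q) :
    ∃ N : ℕ, ∀ m, N ≤ m → τ (wTake I (m + 1)) = 0 := by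
  obtain ⟨L, hL⟩ := hτ.2.2 I hIne hIlt
  refine ⟨I.length + L, fun m hm => ?_⟩
  rw [wTake_of_le I (by omega)]
  exact hL _ (by omega)

lemma tauStar_eq_sum {p q : ℕ} {τ : List ℕ → ℤ} (hτ : IsRegularMap p q τ)
    {I : List ℕ} (hIne : I ≠ []) (hIlt : ∀ i ∈ I, i < q) {N : ℕ}
    (hN : ∀ m, N ≤ m → τ (wTake I (m + 1)) = 0) :
    tauStar p τ I = ∑ m ∈ Finset.range N, τ (wTake I (m + 1)) * (p : ℤ) ^ m := by
  apply finsum_eq_finset_sum_of_support_subset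
  intro m hm
  simp only [Function.mem_support] at hm
  simp only [Finset.coe_range, Set.mem_Iio]
  by_contra hc
  push_neg at hc
  exact hm (by rw [hN m hc]; ring)

end AuxTauStar

/-- If `I, J ∈ Γ(τ)` are distinct and `I_{1,k} = J_{1,k}` for some `k ≥ 0`
(the condition being vacuous for `k = 0`), then `|τ*(I) − τ*(J)| ≥ p^k`. -/
theorem tauStar_separation
    (p q : ℕ) (hq : 2 ≤ q) (hqp : q ≤ p) (hdvd : q ∣ p)
    (τ : List ℕ → ℤ) (hτ : IsRegularMap p q τ)
    (I J : List ℕ) (hI : I ∈ GammaTau q) (hJ : J ∈ GammaTau q) (hIJ : I ≠ J)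
    (k : ℕ) (hk : wTake I k = wTake J k) :
    (p : ℤ) ^ k ≤ |tauStar p τ I - tauStar p τ J| := by
  classical
  obtain ⟨hIne, hIlt⟩ := gamma_facts hq hI
  obtain ⟨hJne, hJlt⟩ := gamma_facts hq hJ
  have hq0 : 0 < q := by omega
  have hp1 : (1 : ℤ) ≤ (p : ℤ) := by
    have : 2 ≤ p := le_trans hq hqp
    exact_mod_cast Nat.one_le_of_lt this
  -- a position where the padded sequences differ
  have hdiff : ∃ m, I.getD m 0 ≠ J.getD m 0 := by
    by_contra h
    push_neg at h
    exact hIJ (gamma_ext hI hJ h)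
  set m0 := Nat.find hdiff with hm0def
  have hm0 : I.getD m0 0 ≠ J.getD m0 0 := Nat.find_spec hdiff
  have hm0min : ∀ m, m < m0 → I.getD m 0 = J.getD m 0 := by
    intro m hm
    by_contra hc
    exact Nat.find_min hdiff hm hc
  have hkm0 : k ≤ m0 := by
    by_contra hc
    push_neg at hc
    apply hm0
    rw [← wTake_getD I hc, ← wTake_getD J hc, hk]
  -- supports
  obtain ⟨NI, hNI⟩ := tau_support hτ hIne hIlt
  obtain ⟨NJ, hNJ⟩ := tau_support hτ hJne hJlt
  set N := max (max NI NJ) (m0 + 1) with hNdef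
  have hNI' : ∀ m, N ≤ m → τ (wTake I (m + 1)) = 0 := fun m hm => hNI m (by omega)
  have hNJ' : ∀ m, N ≤ m → τ (wTake J (m + 1)) = 0 := fun m hm => hNJ m (by omega)
  have hm0N : m0 ∈ Finset.range N := Finset.mem_range.2 (by omega)
  set c : ℕ → ℤ := fun m => (τ (wTake I (m + 1)) - τ (wTake J (m + 1))) with hcdef
  have hD : tauStar p τ I - tauStar p τ J =
      ∑ m ∈ Finset.range N, c m * (p : ℤ) ^ m := by
    rw [tauStar_eq_sum hτ hIne hIlt hNI', tauStar_eq_sum hτ hJne hJlt hNJ',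
      ← Finset.sum_sub_distrib]
    apply Finset.sum_congr rfl
    intro m _
    simp only [hcdef]
    ring
  -- the coefficient at m0 is not divisible by q
  have hlastI := (hτ.2.1 (wTake I (m0 + 1)) (wTake_ne_nil I m0) (wTake_mem_lt hq0 hIlt _)).2.2
  have hlastJ := (hτ.2.1 (wTake J (m0 + 1)) (wTake_ne_nil J m0) (wTake_mem_lt hq0 hJlt _)).2.2
  rw [wTake_getLast!] at hlastI hlastJ
  have hqc : ¬ (q : ℤ) ∣ c m0 := by
    intro hdq
    have h1 : (q : ℤ) ∣ ((I.getD m0 0 : ℤ) - (J.getD m0 0 : ℤ)) := by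
      have : ((I.getD m0 0 : ℤ) - (J.getD m0 0 : ℤ)) =
          c m0 - (τ (wTake I (m0 + 1)) - (I.getD m0 0 : ℤ))
            + (τ (wTake J (m0 + 1)) - (J.getD m0 0 : ℤ)) := by
        simp only [hcdef]; ring
      rw [this]
      exact dvd_add (dvd_sub hdq hlastI) hlastJ
    have hIm : I.getD m0 0 < q := getD_lt hq0 hIlt m0
    have hJm : J.getD m0 0 < q := getD_lt hq0 hJlt m0
    have habs : |(I.getD m0 0 : ℤ) - (J.getD m0 0 : ℤ)| < (q : ℤ) := by
      rw [abs_sub_lt_iff]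
      constructor <;> [skip; skip] <;>
        · have := hIm; have := hJm; push_cast; omega
    have := Int.eq_zero_of_abs_lt_dvd h1 habs
    apply hm0
    omega
  -- coefficients below m0 vanish
  have hzero : ∀ m, m < m0 → c m = 0 := by
    intro m hm
    have : wTake I (m + 1) = wTake J (m + 1) := by
      apply wTake_eq_of_getD
      intro l hl
      exact hm0min l (by omega)
    simp only [hcdef, this, sub_self]
  -- q * p^m0 divides the sum minus the m0 term
  have hdvd2 : ((q : ℤ) * (p : ℤ) ^ m0) ∣
      (∑ m ∈ (Finset.range N).erase m0, c m * (p : ℤ) ^ m) := by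
    apply Finset.dvd_sum
    intro m hm
    have hmne : m ≠ m0 := (Finset.mem_erase.1 hm).1
    rcases lt_or_ge m m0 with h | h
    · rw [hzero m h, zero_mul]
      exact dvd_zero _
    · have hm0m : m0 < m := lt_of_le_of_ne h (fun e => hmne e.symm)
      have : ((q : ℤ) * (p : ℤ) ^ m0) ∣ (p : ℤ) ^ m := by
        have h1 : (p : ℤ) ^ m = (p : ℤ) * (p : ℤ) ^ m0 * (p : ℤ) ^ (m - m0 - 1) := by
          rw [← pow_succ', ← pow_add]
          congr 1
          omega
        rw [h1]
        exact Dvd.dvd.mul_right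
          (mul_dvd_mul_right (Int.natCast_dvd_natCast.2 hdvd) _) _
      exact Dvd.dvd.mul_left this _
  have hsplit : tauStar p τ I - tauStar p τ J =
      c m0 * (p : ℤ) ^ m0 + ∑ m ∈ (Finset.range N).erase m0, c m * (p : ℤ) ^ m := by
    rw [hD]
    exact (Finset.add_sum_erase _ (fun m => c m * (p : ℤ) ^ m) hm0N).symm
  -- p^m0 divides the difference
  have hdvdD : ((p : ℤ) ^ m0) ∣ (tauStar p τ I - tauStar p τ J) := by
    rw [hsplit]
    exact dvd_add (Dvd.dvd.mul_left dvd_rfl _)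
      (dvd_trans (Dvd.dvd.mul_left dvd_rfl _) hdvd2)
  -- the difference is nonzero
  have hDne : tauStar p τ I - tauStar p τ J ≠ 0 := by
    intro h0
    rw [h0] at hsplit
    have h1 : c m0 * (p : ℤ) ^ m0 = -(∑ m ∈ (Finset.range N).erase m0, c m * (p : ℤ) ^ m) := by
      linarith [hsplit.symm]
    have h2 : ((q : ℤ) * (p : ℤ) ^ m0) ∣ c m0 * (p : ℤ) ^ m0 := by
      rw [h1]
      exact Dvd.dvd.neg_right hdvd2
    have hpne : ((p : ℤ) ^ m0) ≠ 0 := by positivity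
    apply hqc
    exact (mul_dvd_mul_iff_right hpne).1 h2
  have habs : (p : ℤ) ^ m0 ≤ |tauStar p τ I - tauStar p τ J| :=
    Int.le_of_dvd (abs_pos.2 hDne) ((dvd_abs _ _).2 hdvdD)
  calc (p : ℤ) ^ k ≤ (p : ℤ) ^ m0 := pow_le_pow_right₀ hp1 hkm0
    _ ≤ _ := habs
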